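/- arXiv:2307.11484 — 7 statements merged into one kernel-verified Lean document; each statement's English description precedes it below -/
import Mathlib

section
/- Let f_θ(y | x, a) be a family of conditional probability densities and φ_θ(y, x) a function with E[φ_θ(Y,X) | A, X] bounded. Then the following are equivalent: (i) E[φ_θ(Y,X)] = 0 for every joint distribution π of (A,X) (where Y | X=x, A=a has density f_θ(·|x,a)); (ii) ∫ φ_θ(y,x) f_θ(y|x,a) dy = 0 for almost all (a,x). -/
open MeasureTheory

/-- Proposition 1 of Bonhomme–Dano: `E[φ(Y,X)] = 0` for every joint distribution
`π` of `(A,X)` (with `Y | X = x, A = a` having density `f x a` w.r.t. `ν`)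
if and only if `∫ φ(y,x) f(y|x,a) dν(y) = 0` for all `(a,x)`. -/
theorem stmt2 {Y A X : Type*} [MeasurableSpace Y] [MeasurableSpace A] [MeasurableSpace X]
    (ν : Measure Y) (f : X → A → Y → ℝ)
    (hf_nonneg : ∀ x a y, 0 ≤ f x a y)
    (hf_density : ∀ x a, (∫ y, f x a y ∂ν) = 1)
    (φ : Y → X → ℝ)
    (hmeas : Measurable fun p : A × X => ∫ y, φ y p.2 * f p.2 p.1 y ∂ν)
    (hbdd : ∃ C : ℝ, ∀ a x, |∫ y, φ y x * f x a y ∂ν| ≤ C) :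
    (∀ π : Measure (A × X), IsProbabilityMeasure π →
        (∫ p, (∫ y, φ y p.2 * f p.2 p.1 y ∂ν) ∂π) = 0) ↔
    (∀ a x, (∫ y, φ y x * f x a y ∂ν) = 0) := by
  constructor
  · intro h a x
    have := h (Measure.dirac (a, x)) (by infer_instance)
    rwa [integral_dirac' _ _ hmeas.stronglyMeasurable] at this
  · intro h π hπ
    simp [h]
end

section
/- Let f_θ(y | x, a) be a family of conditional densities, m_θ(a,x) a given function, and ψ_θ(y,x) a function with E[ψ_θ(Y,X) | A,X] − m_θ(A,X) bounded. Then E[ψ_θ(Y,X)] = E[m_θ(A,X)] holds for every joint distribution π of (A,X) if and only if ∫ ψ_θ(y,x) f_θ(y|x,a) dy = m_θ(a,x) for almost all (a,x). -/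
open MeasureTheory

/-- Proposition 2 of Bonhomme–Dano: `E[ψ(Y,X)] = E[m(A,X)]` for every joint
distribution `π` of `(A,X)` if and only if `∫ ψ(y,x) f(y|x,a) dν(y) = m(a,x)`
for all `(a,x)`. -/
theorem stmt3 {Y A X : Type*} [MeasurableSpace Y] [MeasurableSpace A] [MeasurableSpace X]
    (ν : Measure Y) (f : X → A → Y → ℝ)
    (hf_nonneg : ∀ x a y, 0 ≤ f x a y)
    (hf_density : ∀ x a, (∫ y, f x a y ∂ν) = 1)
    (ψ : Y → X → ℝ) (m : A → X → ℝ)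
    (hmeas : Measurable fun p : A × X => ∫ y, ψ y p.2 * f p.2 p.1 y ∂ν)
    (hm : Measurable fun p : A × X => m p.1 p.2)
    (hbdd : ∃ C : ℝ, ∀ a x, |(∫ y, ψ y x * f x a y ∂ν) - m a x| ≤ C) :
    (∀ π : Measure (A × X), IsProbabilityMeasure π →
        (∫ p, (∫ y, ψ y p.2 * f p.2 p.1 y ∂ν) ∂π) = ∫ p, m p.1 p.2 ∂π) ↔
    (∀ a x, (∫ y, ψ y x * f x a y ∂ν) = m a x) := by
  constructor
  · intro h a x
    have := h (Measure.dirac (a, x)) (by infer_instance)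
    rwa [integral_dirac' _ _ hmeas.stronglyMeasurable,
      integral_dirac' _ _ hm.stronglyMeasurable] at this
  · intro h π hπ
    exact integral_congr_ae (Filter.Eventually.of_forall fun p => h p.1 p.2)
end

section
/- In the logit network model Y_i = 1{x_{i1}'a + x_{i2}'θ + ε_i > 0}, i = 1,...,n, with ε_i iid standard logistic independent of (a,x), a function φ satisfies Σ_{y∈{0,1}^n} φ(y,x) P_θ(Y = y | x, a) = 0 for all a ∈ ℝ^m if and only if for every s in S_{x₁} = { x₁'y : y ∈ {0,1}^n }, Σ_{y∈{0,1}^n} 1{x₁'y = s} φ(y,x) exp(y'x₂θ) = 0. -/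
open Matrix

/-- The 0/1 real vector associated with a Boolean outcome vector. -/
def bval {n : ℕ} (y : Fin n → Bool) : Fin n → ℝ := fun i => if y i then 1 else 0


/-- The multiplicative character `a ↦ exp (s ⬝ᵥ a)`. -/
noncomputable def expChar {m : ℕ} (s : Fin m → ℝ) :
    Multiplicative (Fin m → ℝ) →* ℝ where
  toFun a := Real.exp (s ⬝ᵥ Multiplicative.toAdd a)
  map_one' := by simp
  map_mul' a b := by
    simp [dotProduct_add, Real.exp_add]

lemma expChar_injective {m : ℕ} : Function.Injective (expChar (m := m)) := by
  intro s t h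
  funext j
  have := DFunLike.congr_fun h (Multiplicative.ofAdd (Pi.single j 1))
  simp only [expChar, MonoidHom.coe_mk, OneHom.coe_mk, toAdd_ofAdd,
    dotProduct_single, mul_one] at this
  exact Real.exp_injective this

lemma exp_lin_indep {m : ℕ} (S : Finset (Fin m → ℝ)) (c : (Fin m → ℝ) → ℝ)
    (h : ∀ a : Fin m → ℝ, ∑ s ∈ S, c s * Real.exp (s ⬝ᵥ a) = 0) :
    ∀ s ∈ S, c s = 0 := by
  have hli : LinearIndependent ℝ
      (fun s : Fin m → ℝ => ((expChar s : Multiplicative (Fin m → ℝ) →* ℝ) :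
        Multiplicative (Fin m → ℝ) → ℝ)) :=
    (linearIndependent_monoidHom (Multiplicative (Fin m → ℝ)) ℝ).comp _ expChar_injective
  refine linearIndependent_iff'.1 hli S c ?_
  funext a
  simpa [expChar] using h (Multiplicative.toAdd a)

/-- Proposition 5 of Bonhomme–Dano: in the logit network model
`Yᵢ = 1{x_{i1}'a + x_{i2}'θ + εᵢ > 0}` with iid standard logistic errors,
`Σ_y φ(y) P_θ(Y = y | x, a) = 0` for all `a` iff for every `s ∈ S_{x₁}`,
`Σ_y 1{x₁'y = s} φ(y) exp(y'x₂θ) = 0`. -/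
theorem stmt10 {n m q : ℕ}
    (x₁ : Matrix (Fin n) (Fin m) ℝ) (x₂ : Matrix (Fin n) (Fin q) ℝ)
    (θ : Fin q → ℝ) (φ : (Fin n → Bool) → ℝ) :
    (∀ a : Fin m → ℝ,
        (∑ y : Fin n → Bool, φ y *
          ∏ i, (if y i then Real.exp (x₁ i ⬝ᵥ a + x₂ i ⬝ᵥ θ) else 1) /
            (1 + Real.exp (x₁ i ⬝ᵥ a + x₂ i ⬝ᵥ θ))) = 0) ↔
    (∀ s ∈ {s : Fin m → ℝ | ∃ y : Fin n → Bool, x₁ᵀ.mulVec (bval y) = s},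
        (∑ y : Fin n → Bool,
          (if x₁ᵀ.mulVec (bval y) = s then (1 : ℝ) else 0) * φ y *
            Real.exp (bval y ⬝ᵥ x₂.mulVec θ)) = 0) := by
  classical
  set sf : (Fin n → Bool) → (Fin m → ℝ) := fun y => x₁ᵀ.mulVec (bval y) with hsf
  set F : (Fin n → Bool) → ℝ :=
    fun y => φ y * Real.exp (bval y ⬝ᵥ x₂.mulVec θ) with hF
  -- pointwise identity for each a and y
  have key : ∀ (a : Fin m → ℝ) (y : Fin n → Bool),
      φ y *
        ∏ i, (if y i then Real.exp (x₁ i ⬝ᵥ a + x₂ i ⬝ᵥ θ) else 1) /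
          (1 + Real.exp (x₁ i ⬝ᵥ a + x₂ i ⬝ᵥ θ)) =
      (F y * Real.exp (sf y ⬝ᵥ a)) * ∏ i, (1 + Real.exp (x₁ i ⬝ᵥ a + x₂ i ⬝ᵥ θ))⁻¹ := by
    intro a y
    have hnum : ∀ i, (if y i then Real.exp (x₁ i ⬝ᵥ a + x₂ i ⬝ᵥ θ) else 1) =
        Real.exp (bval y i * (x₁ i ⬝ᵥ a + x₂ i ⬝ᵥ θ)) := by
      intro i; by_cases h : y i <;> simp [bval, h]
    have hprod : (∏ i, (if y i then Real.exp (x₁ i ⬝ᵥ a + x₂ i ⬝ᵥ θ) else 1)) =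
        Real.exp (sf y ⬝ᵥ a + bval y ⬝ᵥ x₂.mulVec θ) := by
      rw [Finset.prod_congr rfl fun i _ => hnum i, ← Real.exp_sum]
      congr 1
      have h1 : sf y ⬝ᵥ a = bval y ⬝ᵥ x₁.mulVec a := by
        simp only [hsf]; rw [Matrix.mulVec_transpose, ← Matrix.dotProduct_mulVec]
      rw [h1]
      simp [dotProduct, Matrix.mulVec, mul_add, Finset.sum_add_distrib]
    calc φ y * ∏ i, (if y i then Real.exp (x₁ i ⬝ᵥ a + x₂ i ⬝ᵥ θ) else 1) /
          (1 + Real.exp (x₁ i ⬝ᵥ a + x₂ i ⬝ᵥ θ))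
        = φ y * ((∏ i, (if y i then Real.exp (x₁ i ⬝ᵥ a + x₂ i ⬝ᵥ θ) else 1)) *
            ∏ i, (1 + Real.exp (x₁ i ⬝ᵥ a + x₂ i ⬝ᵥ θ))⁻¹) := by
          rw [← Finset.prod_mul_distrib]
          simp [div_eq_mul_inv]
      _ = _ := by
          rw [hprod, Real.exp_add, hF]; ring
  have hDpos : ∀ a : Fin m → ℝ, (0:ℝ) < ∏ i, (1 + Real.exp (x₁ i ⬝ᵥ a + x₂ i ⬝ᵥ θ))⁻¹ :=
    fun a => Finset.prod_pos fun i _ => inv_pos.2 (by positivity)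
  have hsum : ∀ a : Fin m → ℝ,
      (∑ y : Fin n → Bool, φ y *
          ∏ i, (if y i then Real.exp (x₁ i ⬝ᵥ a + x₂ i ⬝ᵥ θ) else 1) /
            (1 + Real.exp (x₁ i ⬝ᵥ a + x₂ i ⬝ᵥ θ))) =
      (∑ y : Fin n → Bool, F y * Real.exp (sf y ⬝ᵥ a)) *
        ∏ i, (1 + Real.exp (x₁ i ⬝ᵥ a + x₂ i ⬝ᵥ θ))⁻¹ := by
    intro a
    rw [Finset.sum_mul]
    exact Finset.sum_congr rfl fun y _ => key a y
  constructor
  · intro h s hs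
    obtain ⟨y₀, hy₀⟩ := hs
    -- the grouped sum over the image
    set S : Finset (Fin m → ℝ) := Finset.image sf Finset.univ with hS
    set c : (Fin m → ℝ) → ℝ := fun s =>
      ∑ y : Fin n → Bool, (if sf y = s then (1:ℝ) else 0) * φ y *
        Real.exp (bval y ⬝ᵥ x₂.mulVec θ) with hc
    have hgroup : ∀ a : Fin m → ℝ, ∑ t ∈ S, c t * Real.exp (t ⬝ᵥ a) = 0 := by
      intro a
      have h0 : (∑ y : Fin n → Bool, F y * Real.exp (sf y ⬝ᵥ a)) = 0 := by
        have := h a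
        rw [hsum a] at this
        exact (mul_eq_zero.1 this).resolve_right (ne_of_gt (hDpos a))
      rw [← h0]
      rw [← Finset.sum_fiberwise_of_maps_to (g := sf) (fun y _ => Finset.mem_image_of_mem sf (Finset.mem_univ y))]
      refine Finset.sum_congr rfl fun t _ => ?_
      rw [hc, Finset.sum_mul]
      rw [Finset.sum_filter]
      refine Finset.sum_congr rfl fun y _ => ?_
      by_cases hy : sf y = t
      · have hy' : x₁ᵀ.mulVec (bval y) = t := hy
        simp only [hy, hy', if_true, hF]
        ring
      · have hy' : ¬ x₁ᵀ.mulVec (bval y) = t := hy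
        simp [hy, hy']
    exact exp_lin_indep S c hgroup s
      (hy₀ ▸ Finset.mem_image_of_mem sf (Finset.mem_univ y₀))
  · intro h a
    rw [hsum a]
    apply mul_eq_zero_of_left
    rw [← Finset.sum_fiberwise_of_maps_to (g := sf)
      (fun y _ => Finset.mem_image_of_mem sf (Finset.mem_univ y))]
    refine Finset.sum_eq_zero fun t ht => ?_
    obtain ⟨y₀, _, hy₀⟩ := Finset.mem_image.1 ht
    have h0 := h t ⟨y₀, hy₀⟩
    have : (∑ y ∈ Finset.univ.filter fun y => sf y = t, F y) = 0 := by
      rw [← h0, Finset.sum_filter]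
      refine Finset.sum_congr rfl fun y _ => ?_
      by_cases hy : sf y = t
      · have hy' : x₁ᵀ.mulVec (bval y) = t := hy
        simp [hy, hy', hF]
      · have hy' : ¬ x₁ᵀ.mulVec (bval y) = t := hy
        simp [hy, hy']
    calc (∑ y ∈ Finset.univ.filter fun y => sf y = t, F y * Real.exp (sf y ⬝ᵥ a))
        = (∑ y ∈ Finset.univ.filter fun y => sf y = t, F y) * Real.exp (t ⬝ᵥ a) := by
          rw [Finset.sum_mul]
          refine Finset.sum_congr rfl fun y hy => ?_
          rw [(Finset.mem_filter.1 hy).2]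
      _ = 0 := by rw [this, zero_mul]
end

section
/- In the two-period panel logit model with a binary covariate, there exists no function ψ_θ(y₁,y₂,x) satisfying, for all a ∈ ℝ, Σ_{(y₁,y₂)∈{0,1}²} ψ_θ(y₁,y₂,x) exp((y₁+y₂)a + (y₁x₁ + y₂x₂)θ) / [(exp(a + x₁θ)+1)(exp(a + x₂θ)+1)] = exp(θ+a)/(1+exp(θ+a)) − exp(a)/(1+exp(a)) when x₁ = x₂ and θ ≠ 0. -/
/-- Probability that a logit outcome takes value `y` when the index is `z`. -/
noncomputable def logisticP (y : Bool) (z : ℝ) : ℝ :=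
  if y then Real.exp z / (1 + Real.exp z) else 1 / (1 + Real.exp z)

lemma poly4_zero (a0 a1 a2 a3 a4 : ℝ)
    (h : ∀ x : ℝ, 0 < x → a0 + a1*x + a2*x^2 + a3*x^3 + a4*x^4 = 0) :
    a0 = 0 ∧ a1 = 0 ∧ a2 = 0 ∧ a3 = 0 ∧ a4 = 0 := by
  have h1 := h 1 (by norm_num)
  have h2 := h 2 (by norm_num)
  have h3 := h 3 (by norm_num)
  have h4 := h 4 (by norm_num)
  have h5 := h 5 (by norm_num)
  refine ⟨?_, ?_, ?_, ?_, ?_⟩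
  · linear_combination 5*h1 - 10*h2 + 10*h3 - 5*h4 + h5
  · linear_combination (-77/12)*h1 + (107/6)*h2 - (39/2)*h3 + (61/6)*h4 - (25/12)*h5
  · linear_combination (71/24)*h1 - (59/6)*h2 + (49/4)*h3 - (41/6)*h4 + (35/24)*h5
  · linear_combination (-7/12)*h1 + (13/6)*h2 - 3*h3 + (11/6)*h4 - (5/12)*h5
  · linear_combination (1/24)*h1 - (1/6)*h2 + (1/4)*h3 - (1/6)*h4 + (1/24)*h5

/-- Nonexistence of a moment function for the average partial effect of
"stayers" in the two-period panel logit model: when `x₁ = x₂` and `θ ≠ 0`,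
no `ψ` satisfies `E[ψ(Y₁,Y₂,x) | A = a, X = x] = exp(θ+a)/(1+exp(θ+a)) −
exp(a)/(1+exp(a))` for all `a`. -/
theorem stmt14 (θ x₁ x₂ : ℝ) (hx : x₁ = x₂) (hθ : θ ≠ 0) :
    ¬ ∃ ψ : Bool → Bool → ℝ, ∀ a : ℝ,
      (∑ y₁ : Bool, ∑ y₂ : Bool,
        ψ y₁ y₂ * logisticP y₁ (a + x₁ * θ) * logisticP y₂ (a + x₂ * θ))
      = Real.exp (θ + a) / (1 + Real.exp (θ + a))
        - Real.exp a / (1 + Real.exp a) := by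
  rintro ⟨ψ, hψ⟩
  subst hx
  set p := ψ false false with hp
  set q := ψ false true + ψ true false with hq
  set r := ψ true true with hr
  set C := Real.exp (x₁ * θ) with hC
  set T := Real.exp θ with hT
  have hCpos : 0 < C := Real.exp_pos _
  have hTpos : 0 < T := Real.exp_pos _
  have hT1 : T ≠ 1 := by
    simpa [hT, Real.exp_eq_one_iff] using hθ
  -- key polynomial identity
  have key : ∀ E : ℝ, 0 < E →
      p + (q*C + p*(1+T) - (T-1))*E + (r*C^2 + q*C*(1+T) + p*T - 2*C*(T-1))*E^2
        + (r*C^2*(1+T) + q*C*T - C^2*(T-1))*E^3 + (r*C^2*T)*E^4 = 0 := by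
    intro E hE
    have h := hψ (Real.log E)
    have hexp1 : Real.exp (Real.log E + x₁ * θ) = E * C := by
      rw [Real.exp_add, Real.exp_log hE]
    have hexp2 : Real.exp (θ + Real.log E) = T * E := by
      rw [Real.exp_add, Real.exp_log hE]
    have hexp3 : Real.exp (Real.log E) = E := Real.exp_log hE
    simp only [Fintype.sum_bool, logisticP, if_true, if_false, Bool.false_eq_true, Bool.cond_true,
      hexp1, hexp2, hexp3] at h
    have d1 : (1 : ℝ) + E * C ≠ 0 := by positivity
    have d2 : (1 : ℝ) + T * E ≠ 0 := by positivity
    have d3 : (1 : ℝ) + E ≠ 0 := by positivity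
    field_simp at h
    linear_combination h
  obtain ⟨e0, e1, e2, e3, e4⟩ := poly4_zero _ _ _ _ _ key
  -- p = 0
  have hp0 : p = 0 := e0
  -- r = 0
  have hr0 : r = 0 := by
    have : r * (C^2 * T) = 0 := by linear_combination e4
    rcases mul_eq_zero.mp this with h | h
    · exact h
    · exact absurd h (by positivity)
  simp only [hp0, hr0] at e1 e2 e3
  -- e1 : q*C = T - 1, e2 : q*C*(1+T) = 2*C*(T-1), e3 : q*C*T = C^2*(T-1)
  have hT' : T - 1 ≠ 0 := sub_ne_zero.mpr hT1
  have hTC : (T - 1) * (T - C^2) = 0 := by linear_combination e3 - T * e1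
  have hTC2 : T = C^2 := by
    rcases mul_eq_zero.mp hTC with h | h
    · exact absurd h hT'
    · linarith [sub_eq_zero.mp h]
  have hfac : (T - 1) * ((1 + T) - 2*C) = 0 := by linear_combination e2 - (1 + T) * e1
  have h2C : 1 + T = 2 * C := by
    rcases mul_eq_zero.mp hfac with h | h
    · exact absurd h hT'
    · linarith [sub_eq_zero.mp h]
  have hC1 : C = 1 := by nlinarith [sq_nonneg (C - 1)]
  apply hT1
  rw [hTC2, hC1]; ring
end

section
/- In the two-period panel logit model with binary covariate and x₁ ≠ x₂, a function ψ_θ with ψ_θ(0,0,x) = ψ_θ(1,1,x) = 0 satisfies E[ψ_θ(Y₁,Y₂,X) | A = a, X = x] = exp(θ+a)/(1+exp(θ+a)) − exp(a)/(1+exp(a)) for all a ∈ ℝ if and only if ψ_θ(1,0,x) exp(θx₁) + ψ_θ(0,1,x) exp(θx₂) = exp(θ) − 1. -/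
lemma key (θ ψ10 ψ01 : ℝ) :
    (∀ a : ℝ,
      ψ10 * (Real.exp a / (1 + Real.exp a)) * (1 / (1 + Real.exp (a + θ)))
        + ψ01 * (1 / (1 + Real.exp a)) * (Real.exp (a + θ) / (1 + Real.exp (a + θ)))
      = Real.exp (θ + a) / (1 + Real.exp (θ + a)) - Real.exp a / (1 + Real.exp a)) ↔
    ψ10 + ψ01 * Real.exp θ = Real.exp θ - 1 := by
  constructor
  · intro h
    have h0 := h 0
    have e0 : Real.exp (0:ℝ) = 1 := Real.exp_zero
    have hθ : (0:ℝ) < 1 + Real.exp θ := by positivity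
    rw [zero_add, add_comm θ 0, zero_add] at h0
    rw [e0] at h0
    field_simp at h0
    have hc : (2*(1+Real.exp θ)) ≠ 0 := by positivity
    have h1 : (ψ10 + ψ01 * Real.exp θ) * (2*(1+Real.exp θ))
        = (Real.exp θ - 1) * (2*(1+Real.exp θ)) := by linear_combination (2*(1+Real.exp θ)) * h0
    exact mul_right_cancel₀ hc h1
  · intro h a
    have hθ : (0:ℝ) < 1 + Real.exp θ := by positivity
    have ha : (0:ℝ) < 1 + Real.exp a := by positivity
    have haθ : (0:ℝ) < 1 + Real.exp (a + θ) := by positivity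
    have e1 : Real.exp (a + θ) = Real.exp a * Real.exp θ := Real.exp_add a θ
    have e2 : Real.exp (θ + a) = Real.exp a * Real.exp θ := by
      rw [Real.exp_add]; ring
    rw [e2, e1]
    rw [e1] at haθ
    field_simp
    linear_combination h

/-- Movers' average partial effect in the two-period panel logit model with
binary covariate and `x₁ ≠ x₂`: a function `ψ` with `ψ(0,0) = ψ(1,1) = 0`
satisfies `E[ψ(Y₁,Y₂,x) | A = a, X = x] = exp(θ+a)/(1+exp(θ+a)) −
exp(a)/(1+exp(a))` for all `a` iff
`ψ(1,0) exp(θx₁) + ψ(0,1) exp(θx₂) = exp(θ) − 1`. -/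
theorem stmt15 (θ x₁ x₂ : ℝ)
    (hx₁ : x₁ = 0 ∨ x₁ = 1) (hx₂ : x₂ = 0 ∨ x₂ = 1) (hne : x₁ ≠ x₂)
    (ψ : Bool → Bool → ℝ)
    (h00 : ψ false false = 0) (h11 : ψ true true = 0) :
    (∀ a : ℝ,
        (∑ y₁ : Bool, ∑ y₂ : Bool,
          ψ y₁ y₂ * logisticP y₁ (a + x₁ * θ) * logisticP y₂ (a + x₂ * θ))
        = Real.exp (θ + a) / (1 + Real.exp (θ + a))
          - Real.exp a / (1 + Real.exp a)) ↔
    ψ true false * Real.exp (θ * x₁) + ψ false true * Real.exp (θ * x₂)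
      = Real.exp θ - 1 := by
  rcases hx₁ with h1 | h1 <;> rcases hx₂ with h2 | h2 <;> subst h1 <;> subst h2 <;>
    try exact absurd rfl hne
  · -- x₁ = 0, x₂ = 1
    have hs : ∀ a : ℝ,
        (∑ y₁ : Bool, ∑ y₂ : Bool,
          ψ y₁ y₂ * logisticP y₁ (a + 0 * θ) * logisticP y₂ (a + 1 * θ))
        = ψ true false * (Real.exp a / (1 + Real.exp a)) * (1 / (1 + Real.exp (a + θ)))
          + ψ false true * (1 / (1 + Real.exp a)) * (Real.exp (a + θ) / (1 + Real.exp (a + θ))) := by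
      intro a
      simp [Fintype.sum_bool, logisticP, h00, h11]
      try ring
    simp only [hs]
    rw [key θ (ψ true false) (ψ false true)]
    constructor <;> intro h
    · rw [← h]; simp [Real.exp_zero]
    · rw [← h]; simp [Real.exp_zero]
  · -- x₁ = 1, x₂ = 0
    have hs : ∀ a : ℝ,
        (∑ y₁ : Bool, ∑ y₂ : Bool,
          ψ y₁ y₂ * logisticP y₁ (a + 1 * θ) * logisticP y₂ (a + 0 * θ))
        = ψ false true * (Real.exp a / (1 + Real.exp a)) * (1 / (1 + Real.exp (a + θ)))
          + ψ true false * (1 / (1 + Real.exp a)) * (Real.exp (a + θ) / (1 + Real.exp (a + θ))) := by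
      intro a
      simp [Fintype.sum_bool, logisticP, h00, h11]
      try ring
    simp only [hs]
    rw [key θ (ψ false true) (ψ true false)]
    constructor <;> intro h
    · rw [← h]; simp [Real.exp_zero]; ring
    · rw [← h]; simp [Real.exp_zero]; ring
end

section
/- For x₁ ≠ x₂ binary and any θ, the function ψ_θ(y₁,y₂,x) = y₁(1−y₂)exp(θ(1−x₁)) − (1−y₁)y₂ exp(−θx₂) satisfies ψ_θ(1,0,x)exp(θx₁) + ψ_θ(0,1,x)exp(θx₂) = exp(θ) − 1, and hence identifies the movers' average partial effect in the two-period panel logit model. -/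
/-- An additional valid moment function for the movers' average partial effect:
`ψ(y₁,y₂,x) = y₁(1−y₂)exp(θ(1−x₁)) − (1−y₁)y₂ exp(−θx₂)` satisfies
`ψ(1,0,x)exp(θx₁) + ψ(0,1,x)exp(θx₂) = exp(θ) − 1` for binary `x₁ ≠ x₂`. -/
theorem stmt16 (θ x₁ x₂ : ℝ)
    (hx₁ : x₁ = 0 ∨ x₁ = 1) (hx₂ : x₂ = 0 ∨ x₂ = 1) (hne : x₁ ≠ x₂)
    (ψ : Bool → Bool → ℝ)
    (hψ : ∀ y₁ y₂ : Bool, ψ y₁ y₂ =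
      (if y₁ then (1 : ℝ) else 0) * (1 - if y₂ then (1 : ℝ) else 0) *
        Real.exp (θ * (1 - x₁))
      - (1 - if y₁ then (1 : ℝ) else 0) * (if y₂ then (1 : ℝ) else 0) *
        Real.exp (-(θ * x₂))) :
    ψ true false * Real.exp (θ * x₁) + ψ false true * Real.exp (θ * x₂)
      = Real.exp θ - 1 := by
  rw [hψ, hψ]
  simp only [if_true, if_false]
  rcases hx₁ with h1 | h1 <;> rcases hx₂ with h2 | h2 <;> subst h1 h2 <;>
    simp_all [← Real.exp_add] <;> ring
end

section
/- In the undirected tetrad logit network-formation model, for any a ∈ ℝ⁴, the conditional probabilities of the three perfect matchings (y_{ij}=y_{kℓ}=1), (y_{ik}=y_{jℓ}=1), (y_{iℓ}=y_{jk}=1) (with all other links zero) given the degree sequence (1,1,1,1) are proportional to exp((x_{ij}+x_{kℓ})'θ), exp((x_{ik}+x_{jℓ})'θ), exp((x_{iℓ}+x_{jk})'θ) respectively, independently of a. -/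
open Matrix

/-- Probability of a link configuration `(y_ij, y_ik, y_iℓ, y_jk, y_jℓ, y_kℓ)`
among four agents `i,j,k,ℓ` (with effects `a 0, a 1, a 2, a 3`) in the logistic
network-formation model `Y_uv = 1{x_uv'θ + a_u + a_v + ε_uv ≥ 0}`. -/
noncomputable def tetradProb {d : ℕ} (θ xij xik xil xjk xjl xkl : Fin d → ℝ)
    (a : Fin 4 → ℝ) (yij yik yil yjk yjl ykl : Bool) : ℝ :=
  logisticP yij (xij ⬝ᵥ θ + a 0 + a 1) *
  logisticP yik (xik ⬝ᵥ θ + a 0 + a 2) *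
  logisticP yil (xil ⬝ᵥ θ + a 0 + a 3) *
  logisticP yjk (xjk ⬝ᵥ θ + a 1 + a 2) *
  logisticP yjl (xjl ⬝ᵥ θ + a 1 + a 3) *
  logisticP ykl (xkl ⬝ᵥ θ + a 2 + a 3)

/-- Basis of Graham's (2017) tetrad logit: given the degree sequence
`(1,1,1,1)`, the probabilities of the three perfect matchings
`{ij,kℓ}`, `{ik,jℓ}`, `{iℓ,jk}` are proportional to
`exp((x_ij+x_kℓ)'θ)`, `exp((x_ik+x_jℓ)'θ)`, `exp((x_iℓ+x_jk)'θ)`,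
independently of the agent effects `a`. -/
theorem stmt18 {d : ℕ} (θ xij xik xil xjk xjl xkl : Fin d → ℝ) :
    ∀ a : Fin 4 → ℝ,
      tetradProb θ xij xik xil xjk xjl xkl a true false false false false true *
          Real.exp ((xik + xjl) ⬝ᵥ θ)
        = tetradProb θ xij xik xil xjk xjl xkl a false true false false true false *
            Real.exp ((xij + xkl) ⬝ᵥ θ) ∧
      tetradProb θ xij xik xil xjk xjl xkl a false true false false true false *
          Real.exp ((xil + xjk) ⬝ᵥ θ)
        = tetradProb θ xij xik xil xjk xjl xkl a false false true true false false *
            Real.exp ((xik + xjl) ⬝ᵥ θ) := by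
  intro a
  simp only [tetradProb, logisticP, if_pos, if_neg, Bool.false_eq_true, not_false_iff,
    ite_true, ite_false, add_dotProduct, Real.exp_add]
  constructor <;> ring
end
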